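/- arXiv:1603.02725 — 2 statements merged into one kernel-verified Lean document; each statement's English description precedes it below -/
import Mathlib

section
/- Suppose {f_l}_{l≥0} is a sequence of functions in H^∞(D^{n-1}), each with f_l^{-1} ∈ L^∞(T^{n-1}), such that f_l/f_{l+1} also lies in H^∞(D^{n-1}) with bounded inverse boundary values for every l. Then M = ⊕_{l≥0} f_l(z₁,…,z_{n-1})·H²(D^{n-1})·z_n^l is a closed subspace of H²(D^n) invariant under multiplication by each of z₁,…,z_n. -/
/-!
Common setup: we model the Hardy space `H²(𝔻ⁿ)` via boundary values on the
`n`-torus `Tⁿ = (ℝ/ℤ)ⁿ`: `H²` is the subspace of `L²(Tⁿ)` of functions whose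
Fourier coefficients with some negative index vanish.  `H^∞` functions are
(a.e. classes of) essentially bounded measurable functions with analytic
(nonnegative) Fourier spectrum, identified with their boundary functions `f*`.
Multiplication operators are expressed via a.e. pointwise products.
-/

open MeasureTheory Complex
open scoped ComplexConjugate

noncomputable section

/-- The `n`-torus. -/
abbrev Torus (n : ℕ) := Fin n → AddCircle (1 : ℝ)

/-- `L²(Tⁿ)`. -/
abbrev Lp2 (n : ℕ) := Lp ℂ 2 (volume : Measure (Torus n))

/-- The monomial `z^α` (as a function on the torus). -/
def charFun {n : ℕ} (α : Fin n → ℤ) : Torus n → ℂ := fun x => ∏ i, fourier (α i) (x i)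

lemma charFun_continuous {n : ℕ} (α : Fin n → ℤ) : Continuous (charFun α) :=
  continuous_finset_prod _ fun i _ => (fourier (α i)).continuous.comp (continuous_apply i)

lemma charFun_norm {n : ℕ} (α : Fin n → ℤ) (x : Torus n) : ‖charFun α x‖ = 1 := by
  rw [_root_.charFun, norm_prod]
  simp [Circle.norm_coe]

lemma charFun_memℒp {n : ℕ} (α : Fin n → ℤ) :
    MemLp (charFun α) 2 (volume : Measure (Torus n)) :=
  MemLp.of_bound (charFun_continuous α).aestronglyMeasurable 1
    (Filter.Eventually.of_forall fun x => (charFun_norm α x).le)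

/-- The monomial `z^α` as an element of `L²(Tⁿ)`. -/
def charLp {n : ℕ} (α : Fin n → ℤ) : Lp2 n := (charFun_memℒp α).toLp _

/-- The `α`-th Fourier coefficient of `f ∈ L²(Tⁿ)`. -/
def coeff {n : ℕ} (f : Lp2 n) (α : Fin n → ℤ) : ℂ := inner (𝕜 := ℂ) (charLp α) f

/-- The Hardy space `H²(𝔻ⁿ)` (boundary model): elements of `L²(Tⁿ)` whose Fourier
coefficients vanish off `ℕⁿ`. -/
def H2 (n : ℕ) : Submodule ℂ (Lp2 n) where
  carrier := {f | ∀ α : Fin n → ℤ, (∃ i, α i < 0) → coeff f α = 0}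
  add_mem' := fun {f} {g} hf hg α hα => by
    have h1 := hf α hα; have h2 := hg α hα
    simp only [coeff] at h1 h2 ⊢
    rw [inner_add_right, h1, h2, add_zero]
  zero_mem' := fun α _ => by simp [coeff]
  smul_mem' := fun c {f} hf α hα => by
    have h1 := hf α hα
    simp only [coeff] at h1 ⊢
    rw [inner_smul_right, h1, mul_zero]

/-- `H²(𝔻ⁿ)` as a subset of `L²(Tⁿ)`. -/
def H2set (n : ℕ) : Set (Lp2 n) := (H2 n : Set (Lp2 n))

/-- `φ` is (the boundary function of) an `H^∞(𝔻ⁿ)` function. -/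
structure IsHinf {n : ℕ} (φ : Torus n → ℂ) : Prop where
  memLinf : MemLp φ ⊤ (volume : Measure (Torus n))
  analytic : ∀ α : Fin n → ℤ, (∃ i, α i < 0) →
    ∫ x, conj (charFun α x) * φ x ∂(volume : Measure (Torus n)) = 0

/-- Generalized inner: `φ ∈ H^∞` with `1/φ* ∈ L^∞`, i.e. `|φ*|` essentially bounded below. -/
def IsGenInner {n : ℕ} (φ : Torus n → ℂ) : Prop :=
  IsHinf φ ∧ ∃ c : ℝ, 0 < c ∧ ∀ᵐ x ∂(volume : Measure (Torus n)), c ≤ ‖φ x‖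

/-- Inner: `φ ∈ H^∞` with `|φ*| = 1` a.e. -/
def IsInner {n : ℕ} (φ : Torus n → ℂ) : Prop :=
  IsHinf φ ∧ ∀ᵐ x ∂(volume : Measure (Torus n)), ‖φ x‖ = 1

/-- The image `φ·M` of a set `M ⊆ L²` under multiplication by a function `φ`. -/
def mulSet {n : ℕ} (φ : Torus n → ℂ) (M : Set (Lp2 n)) : Set (Lp2 n) :=
  {g | ∃ f ∈ M, (g : Torus n → ℂ) =ᵐ[(volume : Measure (Torus n))]
      fun x => φ x * (f : Torus n → ℂ) x}

/-- The coordinate function `z_i` on the torus. -/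
def zCoord {n : ℕ} (i : Fin n) : Torus n → ℂ := charFun (Pi.single i 1)

/-- Set-sum `A + B`. -/
def sumSet {n : ℕ} (A B : Set (Lp2 n)) : Set (Lp2 n) := {h | ∃ a ∈ A, ∃ b ∈ B, h = a + b}

/-- Orthogonal difference `A ⊖ B`: elements of `A` orthogonal to `B`. -/
def osub {n : ℕ} (A B : Set (Lp2 n)) : Set (Lp2 n) :=
  {x ∈ A | ∀ y ∈ B, (inner (𝕜 := ℂ) y x : ℂ) = 0}

/-- `M` is a closed subspace of `L²(Tⁿ)` invariant under multiplication by every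
coordinate `z₁, …, zₙ`. -/
structure IsInvariantSubspace {n : ℕ} (M : Set (Lp2 n)) : Prop where
  zero_mem : (0 : Lp2 n) ∈ M
  add_mem : ∀ f g : Lp2 n, f ∈ M → g ∈ M → f + g ∈ M
  smul_mem : ∀ (c : ℂ) (f : Lp2 n), f ∈ M → c • f ∈ M
  closed : IsClosed M
  shift_mem : ∀ i : Fin n, mulSet (zCoord i) M ⊆ M

/-- Lift of a function of `z₁,…,zₙ` to the `(n+1)`-torus (ignoring the last variable). -/
def liftLast {n : ℕ} (φ : Torus n → ℂ) : Torus (n+1) → ℂ := fun x => φ (Fin.init x)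

/-- Lift of a function of `z₂,…,z_{n+1}` to the `(n+1)`-torus (ignoring the first variable). -/
def liftTail {n : ℕ} (φ : Torus n → ℂ) : Torus (n+1) → ℂ := fun x => φ (Fin.tail x)

/-- Lift of a one-variable function to the `(n+1)`-torus via the first variable. -/
def liftFst {n : ℕ} (φ : Torus 1 → ℂ) : Torus (n+1) → ℂ := fun x => φ (fun _ => x 0)

/-- `H²(𝔻ⁿ)` embedded in `L²(T^{n+1})` as the functions independent of the last variable. -/
def H2resLast (n : ℕ) : Set (Lp2 (n+1)) :=
  {F | ∀ α : Fin (n+1) → ℤ, ((∃ i, α i < 0) ∨ α (Fin.last n) ≠ 0) → coeff F α = 0}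

/-- `H²(𝔻ⁿ)` (variables `z₂,…,z_{n+1}`) embedded in `L²(T^{n+1})`:
functions independent of the first variable. -/
def H2resFst (n : ℕ) : Set (Lp2 (n+1)) :=
  {F | ∀ α : Fin (n+1) → ℤ, ((∃ i, α i < 0) ∨ α 0 ≠ 0) → coeff F α = 0}

/-- `H²(𝔻)` in the first variable only, inside `L²(T^{n+1})`. -/
def H2onlyFst (n : ℕ) : Set (Lp2 (n+1)) :=
  {F | ∀ α : Fin (n+1) → ℤ, ((∃ i, α i < 0) ∨ (∃ i, i ≠ 0 ∧ α i ≠ 0)) → coeff F α = 0}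

/-- The `l`-th piece `z_n^l · f_l · H²(𝔻^{n-1})` of a sequence-based subspace
(distinguished variable: the last one). -/
def seqPiece {n : ℕ} (f : ℕ → Torus n → ℂ) (l : ℕ) : Set (Lp2 (n+1)) :=
  mulSet (fun x => charFun (Pi.single (Fin.last n) (l : ℤ)) x * liftLast (f l) x) (H2resLast n)

/-- The sequence-based subspace `⊕_{l≥0} f_l H²(𝔻^{n-1}) z_n^l`, as the closed span of its
(pairwise orthogonal, closed) pieces. -/
def seqM {n : ℕ} (f : ℕ → Torus n → ℂ) : Submodule ℂ (Lp2 (n+1)) :=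
  (Submodule.span ℂ (⋃ l : ℕ, seqPiece f l)).topologicalClosure

/-- Conditions (I) and (II): each `f_l` is generalized inner, and each quotient
`f_l / f_{l+1}` is a generalized inner function (expressed via `f_{l+1} · q = f_l`). -/
def SeqCond {n : ℕ} (f : ℕ → Torus n → ℂ) : Prop :=
  (∀ l, IsGenInner (f l)) ∧
  ∀ l, ∃ q : Torus n → ℂ, IsGenInner q ∧
    (fun x => f (l+1) x * q x) =ᵐ[(volume : Measure (Torus n))] f l

/-- The vector-valued Hardy space `H²(K)` with `K = H²(𝔻ⁿ)`, realized as `ℓ²` of the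
Taylor coefficients. -/
abbrev lpH (n : ℕ) := lp (fun _ : ℕ => H2 n) 2

/-- `G` is the image of `F` under multiplication by the independent variable (the shift). -/
def ShiftRel {K : Type*} [NormedAddCommGroup K] (F G : lp (fun _ : ℕ => K) 2) : Prop :=
  (G : ∀ _ : ℕ, K) 0 = 0 ∧ ∀ m, (G : ∀ _ : ℕ, K) (m + 1) = (F : ∀ _ : ℕ, K) m

/-- The `l`-th Taylor coefficient of a (boundary) function on the circle. -/
def hinfCoeff (φ : Torus 1 → ℂ) (l : ℤ) : ℂ :=
  ∫ x, conj (charFun (fun _ : Fin 1 => l) x) * φ x ∂(volume : Measure (Torus 1))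

/-- Unitary equivalence of (invariant) subspaces `M₁, M₂ ⊆ L²(Tⁿ)`: a surjective linear
isometry `U : M₁ → M₂` intertwining multiplication by every `H^∞` function. -/
def UnitaryEquivalent {n : ℕ} (M₁ M₂ : Set (Lp2 n)) : Prop :=
  ∃ U : Lp2 n → Lp2 n,
    (∀ f ∈ M₁, U f ∈ M₂) ∧
    (∀ g ∈ M₂, ∃ f ∈ M₁, U f = g) ∧
    (∀ f g : Lp2 n, f ∈ M₁ → g ∈ M₁ → U (f + g) = U f + U g) ∧
    (∀ (c : ℂ) (f : Lp2 n), f ∈ M₁ → U (c • f) = c • U f) ∧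
    (∀ f ∈ M₁, ‖U f‖ = ‖f‖) ∧
    (∀ φ : Torus n → ℂ, IsHinf φ → ∀ f ∈ M₁, ∀ g ∈ M₁, ∀ g' : Lp2 n,
      ((g : Torus n → ℂ) =ᵐ[(volume : Measure (Torus n))]
        fun x => φ x * (f : Torus n → ℂ) x) →
      ((g' : Torus n → ℂ) =ᵐ[(volume : Measure (Torus n))]
        fun x => φ x * ((U f : Lp2 n) : Torus n → ℂ) x) →
      U g = g')

/-!
Everything is read off Fourier supports. By Parseval, multiplying an `L²` function with
spectrum in `B` by a bounded function with spectrum in `A` gives spectrum in `A + B`. Hence the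
`l`-th summand has spectrum in `{γ ≥ 0, γₙ = l}` and lies in `H²`; `z_j` (`j < n`) preserves each
summand, and `z_n` maps the `l`-th into the `(l+1)`-th, since `z_n · z_n^l f_l h =
z_n^{l+1} f_{l+1} (q_l h)` with `q_l = f_l / f_{l+1} ∈ H^∞` preserving `H²(𝔻^{n-1})`. Invariance passes to the closed span
because multiplication by `z_i` is a bounded operator.
-/

namespace PolydiscHardy

open scoped Pointwise

variable {m n : ℕ}

lemma mapsTo_topologicalClosure_span {R M : Type*} [Semiring R] [TopologicalSpace R]
    [AddCommMonoid M] [TopologicalSpace M] [Module R M] [ContinuousSMul R M] [ContinuousAdd M]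
    {T : M →L[R] M} {s : Set M} (h : Set.MapsTo T s s) :
    Set.MapsTo T (Submodule.span R s).topologicalClosure (Submodule.span R s).topologicalClosure :=
  (Module.End.mem_invtSubmodule _).1 <| Submodule.topologicalClosure_mem_invtSubmodule <|
    (Module.End.mem_invtSubmodule _).2 <| Submodule.span_le.2 fun _ hx =>
      Submodule.subset_span (h hx)

lemma volume_torus_eq_pi_haarAddCircle :
    (volume : Measure (Torus m)) = Measure.pi fun _ => AddCircle.haarAddCircle := by
  have h : (volume : Measure (AddCircle (1 : ℝ))) = AddCircle.haarAddCircle := by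
    rw [AddCircle.volume_eq_smul_haarAddCircle, ENNReal.ofReal_one, one_smul]
  simp only [volume_pi, h]

instance : IsProbabilityMeasure (volume : Measure (AddCircle (1 : ℝ))) :=
  ⟨by simp [AddCircle.measure_univ]⟩

lemma charFun_add (α β : Fin m → ℤ) (x : Torus m) :
    charFun (α + β) x = charFun α x * charFun β x :=
  UnitAddTorus.mFourier_add (m := α) (n := β) (x := x)

lemma conj_charFun (α : Fin m → ℤ) (x : Torus m) : conj (charFun α x) = charFun (-α) x :=
  (UnitAddTorus.mFourier_neg (n := α) (x := x)).symm

lemma conj_charFun_mul_charFun (α β : Fin m → ℤ) (x : Torus m) :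
    conj (charFun α x) * charFun β x = charFun (β - α) x := by
  rw [conj_charFun, ← charFun_add, neg_add_eq_sub]

lemma integral_fourier (k : ℤ) :
    ∫ x : AddCircle (1 : ℝ), fourier k x = if k = 0 then 1 else 0 := by
  split_ifs with h
  · simp [h]
  · exact integral_eq_zero_of_add_right_eq_neg (fourier_add_half_inv_index h one_pos)

lemma integral_charFun (α : Fin m → ℤ) :
    ∫ x : Torus m, charFun α x = if α = 0 then 1 else 0 := by
  unfold _root_.charFun
  rw [integral_fintype_prod_volume_eq_prod (f := fun i y => (fourier (α i) y : ℂ))]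
  simp only [integral_fourier]
  split_ifs with h
  · simp [h]
  · obtain ⟨i, hi⟩ := Function.ne_iff.mp h
    exact Finset.prod_eq_zero (Finset.mem_univ i) (by simpa using hi)

-- Unlike `coeff`, defined for every function, so that it applies to `H^∞` symbols as well.
def torusCoeff (φ : Torus m → ℂ) (α : Fin m → ℤ) : ℂ := ∫ x, conj (charFun α x) * φ x

lemma coeff_eq_torusCoeff (F : Lp2 m) (α : Fin m → ℤ) : coeff F α = torusCoeff F α := by
  rw [coeff, L2.inner_def]
  refine integral_congr_ae ?_
  filter_upwards [MemLp.coeFn_toLp (charFun_memℒp α)] with x hx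
  rw [RCLike.inner_apply, charLp, hx, mul_comm]

-- Mathlib's Parseval identity on the torus is stated for the normalized Haar measure.
lemma hasSum_torusCoeff_mul {F G : Torus m → ℂ} (hF : MemLp F 2) (hG : MemLp G 2) :
    HasSum (fun β => conj (torusCoeff F β) * torusCoeff G β) (∫ x, conj (F x) * G x) := by
  rw [volume_torus_eq_pi_haarAddCircle] at hF hG
  have coeff_toLp : ∀ {H : Torus m → ℂ}
      (hH : MemLp H 2 (Measure.pi fun _ => AddCircle.haarAddCircle)) β,
      UnitAddTorus.mFourierCoeff (hH.toLp H) β = torusCoeff H β := by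
    intro H hH β
    rw [torusCoeff, volume_torus_eq_pi_haarAddCircle]
    refine integral_congr_ae ?_
    filter_upwards [hH.coeFn_toLp] with x hx
    rw [hx, smul_eq_mul, UnitAddTorus.mFourier_neg]
    rfl
  have := UnitAddTorus.hasSum_prod_mFourierCoeff (hF.toLp F) (hG.toLp G)
  simp only [coeff_toLp] at this
  convert this using 1
  rw [volume_torus_eq_pi_haarAddCircle]
  refine integral_congr_ae ?_
  filter_upwards [hF.coeFn_toLp, hG.coeFn_toLp] with x h1 h2
  rw [h1, h2]

def SpectrumIn (φ : Torus m → ℂ) (S : Set (Fin m → ℤ)) : Prop :=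
  ∀ α ∉ S, torusCoeff φ α = 0

section Spectrum

variable {φ ψ F : Torus m → ℂ} {A B S T : Set (Fin m → ℤ)}

lemma SpectrumIn.mono (h : SpectrumIn φ S) (hST : S ⊆ T) : SpectrumIn φ T :=
  fun α hα => h α fun hS => hα (hST hS)

lemma SpectrumIn.congr_ae (h : SpectrumIn φ S) (hφψ : φ =ᵐ[volume] ψ) : SpectrumIn ψ S := by
  intro α hα
  rw [← h α hα, torusCoeff, torusCoeff]
  refine integral_congr_ae ?_
  filter_upwards [hφψ] with x hx
  rw [hx]

lemma spectrumIn_charFun (β : Fin m → ℤ) : SpectrumIn (charFun β) {β} := by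
  intro α hα
  simp only [torusCoeff, conj_charFun_mul_charFun, integral_charFun,
    if_neg (sub_ne_zero.2 (Ne.symm hα))]

lemma SpectrumIn.mul (hφ : MemLp φ ⊤) (hF : MemLp F 2) (hφA : SpectrumIn φ A)
    (hFB : SpectrumIn F B) : SpectrumIn (fun x => φ x * F x) (A + B) := by
  intro α hα
  -- `torusCoeff (φ * F) α = ⟪φ̄ · e_α, F⟫`, expanded by Parseval.
  set G : Torus m → ℂ := fun x => conj (φ x) * charFun α x
  have hG : MemLp G 2 := by
    refine (hφ.mono_exponent le_top).of_le ((RCLike.continuous_conj.comp_aestronglyMeasurable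
      hφ.1).mul (charFun_continuous α).aestronglyMeasurable) (.of_forall fun x => ?_)
    simp [G, charFun_norm]
  have conj_coeff_G : ∀ β, conj (torusCoeff G β) = torusCoeff φ (α - β) := by
    intro β
    rw [torusCoeff, torusCoeff, ← integral_conj]
    congr 1
    funext x
    simp only [G, map_mul, Complex.conj_conj, ← conj_charFun_mul_charFun]
    ring
  have hcoeff : torusCoeff (fun x => φ x * F x) α = ∫ x, conj (G x) * F x := by
    refine integral_congr_ae (.of_forall fun x => ?_)
    simp only [G, map_mul, Complex.conj_conj]
    ring
  rw [hcoeff]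
  refine (hasSum_torusCoeff_mul hG hF).unique ?_
  convert hasSum_zero with β
  rw [conj_coeff_G]
  by_cases hβ : β ∈ B
  · rw [hφA (α - β) fun h => hα ⟨α - β, h, β, hβ, sub_add_cancel α β⟩, zero_mul]
  · rw [hFB β hβ, mul_zero]

end Spectrum

lemma measurePreserving_init :
    MeasurePreserving (Fin.init : Torus (n+1) → Torus n) volume volume := by
  have h := measurePreserving_snd.comp (measurePreserving_piFinSuccAbove
    (fun _ : Fin (n+1) => (volume : Measure (AddCircle (1 : ℝ)))) (Fin.last n))
  have hsnd : (Prod.snd ∘ MeasurableEquiv.piFinSuccAbove (fun _ => AddCircle (1 : ℝ))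
      (Fin.last n) : Torus (n+1) → Torus n) = Fin.init :=
    funext Fin.removeNth_last
  rw [← hsnd]
  exact h

lemma integral_mul_last_init (a : AddCircle (1 : ℝ) → ℂ) (b : Torus n → ℂ) :
    ∫ x : Torus (n+1), a (x (Fin.last n)) * b (Fin.init x) = (∫ t, a t) * ∫ y, b y := by
  have e := measurePreserving_piFinSuccAbove
    (fun _ : Fin (n+1) => (volume : Measure (AddCircle (1 : ℝ)))) (Fin.last n)
  refine Eq.trans ?_ ((e.integral_comp (MeasurableEquiv.measurableEmbedding _)
    (fun z => a z.1 * b z.2)).trans (integral_prod_mul a b))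
  congr 1
  funext x
  simp

lemma charFun_eq_fourier_last_mul (γ : Fin (n+1) → ℤ) (x : Torus (n+1)) :
    charFun γ x =
      fourier (γ (Fin.last n)) (x (Fin.last n)) * charFun (Fin.init γ) (Fin.init x) := by
  unfold _root_.charFun
  rw [Fin.prod_univ_castSucc, mul_comm]
  rfl

lemma spectrumIn_liftLast {ψ : Torus n → ℂ} {S : Set (Fin n → ℤ)} (h : SpectrumIn ψ S) :
    SpectrumIn (liftLast ψ) {γ | Fin.init γ ∈ S ∧ γ (Fin.last n) = 0} := by
  intro γ hγ
  have hsplit : ∀ x : Torus (n+1), conj (charFun γ x) * liftLast ψ x =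
      fourier (-γ (Fin.last n)) (x (Fin.last n)) *
        (conj (charFun (Fin.init γ) (Fin.init x)) * ψ (Fin.init x)) := by
    intro x
    rw [conj_charFun, charFun_eq_fourier_last_mul, conj_charFun, mul_assoc]
    rfl
  rw [torusCoeff, funext hsplit, integral_mul_last_init (fun t => fourier _ t)
    (fun y => conj (charFun (Fin.init γ) y) * ψ y), integral_fourier]
  rcases not_and_or.mp hγ with hS | hl
  · rw [show ∫ y, conj (charFun (Fin.init γ) y) * ψ y = 0 from h _ hS, mul_zero]
  · rw [if_neg (neg_ne_zero.2 hl), zero_mul]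

lemma exists_neg_iff_not_nonneg (α : Fin m → ℤ) : (∃ i, α i < 0) ↔ ¬ 0 ≤ α := by
  simp [Pi.le_def]

lemma mem_H2_iff (F : Lp2 m) : F ∈ H2 m ↔ SpectrumIn F {α | 0 ≤ α} := by
  simp only [H2, Submodule.mem_mk, AddSubmonoid.mem_mk, AddSubsemigroup.mem_mk, Set.mem_ofPred_eq,
    SpectrumIn, exists_neg_iff_not_nonneg, coeff_eq_torusCoeff]

lemma _root_.IsHinf.spectrumIn {φ : Torus m → ℂ} (hφ : IsHinf φ) : SpectrumIn φ {α | 0 ≤ α} :=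
  fun α hα => hφ.analytic α ((exists_neg_iff_not_nonneg α).2 hα)

lemma isClosed_H2 (m : ℕ) : IsClosed (H2 m : Set (Lp2 m)) := by
  have h : (H2 m : Set (Lp2 m)) =
      ⋂ (α : Fin m → ℤ) (_ : ∃ i, α i < 0), {g | innerSL ℂ (charLp α) g = 0} := by
    ext g
    simp only [Set.mem_iInter]
    rfl
  rw [h]
  exact isClosed_iInter fun α => isClosed_iInter fun _ =>
    isClosed_eq (innerSL ℂ (charLp α)).continuous continuous_const

/-- The Fourier support of the `l`-th summand `f_l H²(𝔻^{n-1}) z_n^l`. -/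
def orthantSlice (n l : ℕ) : Set (Fin (n+1) → ℤ) := {γ | 0 ≤ γ ∧ γ (Fin.last n) = l}

lemma orthantSlice_add_subset (k l : ℕ) :
    orthantSlice n k + orthantSlice n l ⊆ orthantSlice n (k + l) := by
  rintro _ ⟨a, ⟨ha, hak⟩, b, ⟨hb, hbl⟩, rfl⟩
  exact ⟨add_nonneg ha hb, by simp [hak, hbl]⟩

lemma mem_H2resLast_iff (F : Lp2 (n+1)) :
    F ∈ H2resLast n ↔ SpectrumIn F (orthantSlice n 0) := by
  simp only [H2resLast, SpectrumIn, orthantSlice, Set.mem_ofPred_eq, exists_neg_iff_not_nonneg,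
    not_and_or, coeff_eq_torusCoeff, Nat.cast_zero]

lemma _root_.IsHinf.spectrumIn_liftLast {ψ : Torus n → ℂ} (hψ : IsHinf ψ) :
    SpectrumIn (liftLast ψ) (orthantSlice n 0) := by
  refine (PolydiscHardy.spectrumIn_liftLast hψ.spectrumIn).mono
    fun γ ⟨hinit, hlast⟩ => ⟨fun i => ?_, hlast⟩
  cases i using Fin.lastCases with
  | last => exact hlast.ge
  | cast j => exact hinit j

lemma memLp_liftLast {ψ : Torus n → ℂ} {p : ENNReal} (hψ : MemLp ψ p) : MemLp (liftLast ψ) p :=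
  hψ.comp_measurePreserving measurePreserving_init

lemma memLp_top_charFun (α : Fin m → ℤ) : MemLp (charFun α) ⊤ :=
  memLp_top_of_bound (charFun_continuous α).aestronglyMeasurable 1
    (.of_forall fun x => (charFun_norm α x).le)

lemma spectrumIn_piece {ψ : Torus n → ℂ} (hψ : IsHinf ψ) (l : ℕ) :
    SpectrumIn (fun x => charFun (Pi.single (Fin.last n) (l : ℤ)) x * liftLast ψ x)
      (orthantSlice n l) := by
  have hsingle : {Pi.single (Fin.last n) (l : ℤ)} ⊆ orthantSlice n l := by
    rintro _ rfl
    exact ⟨Pi.single_nonneg.2 l.cast_nonneg, Pi.single_eq_same _ _⟩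
  exact (((spectrumIn_charFun _).mono hsingle).mul (memLp_top_charFun _)
    ((memLp_liftLast hψ.memLinf).mono_exponent le_top) hψ.spectrumIn_liftLast).mono
      (orthantSlice_add_subset l 0)

def mulOp {φ : Torus m → ℂ} (hφ : MemLp φ ⊤) : Lp2 m →L[ℂ] Lp2 m :=
  (ContinuousLinearMap.mul ℂ ℂ).holderL volume ⊤ 2 2 (hφ.toLp φ)

lemma coeFn_mulOp {φ : Torus m → ℂ} (hφ : MemLp φ ⊤) (g : Lp2 m) :
    mulOp hφ g =ᵐ[volume] fun x => φ x * g x := by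
  filter_upwards [(ContinuousLinearMap.mul ℂ ℂ).coeFn_holder (r := 2) (hφ.toLp φ) g,
    hφ.coeFn_toLp] with x h1 h2
  rw [mulOp, ContinuousLinearMap.holderL_apply_apply, h1, ContinuousLinearMap.mul_apply', h2]

lemma mulOp_mem_H2resLast {φ : Torus (n+1) → ℂ} (hφ : MemLp φ ⊤)
    (hφS : SpectrumIn φ (orthantSlice n 0)) {F : Lp2 (n+1)} (hF : F ∈ H2resLast n) :
    mulOp hφ F ∈ H2resLast n := by
  rw [mem_H2resLast_iff] at hF ⊢
  exact ((hφS.mul hφ (Lp.memLp F) hF).mono (orthantSlice_add_subset 0 0)).congr_ae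
    (coeFn_mulOp hφ F).symm

lemma memLp_top_zCoord (i : Fin m) : MemLp (zCoord i) ⊤ := memLp_top_charFun _

lemma spectrumIn_zCoord_castSucc (j : Fin n) :
    SpectrumIn (zCoord j.castSucc) (orthantSlice n 0) := by
  refine (spectrumIn_charFun _).mono ?_
  rintro _ rfl
  exact ⟨Pi.single_nonneg.2 zero_le_one, Pi.single_eq_of_ne (Fin.castSucc_lt_last j).ne' _⟩

variable {f : ℕ → Torus n → ℂ} {l : ℕ} {g : Lp2 (n+1)}

lemma spectrumIn_of_mem_seqPiece (hf : IsHinf (f l)) (hg : g ∈ seqPiece f l) :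
    SpectrumIn g (orthantSlice n l) := by
  obtain ⟨F, hF, hgF⟩ := hg
  rw [mem_H2resLast_iff] at hF
  have hsymb : MemLp (fun x => charFun (Pi.single (Fin.last n) (l : ℤ)) x * liftLast (f l) x) ⊤ :=
    (memLp_liftLast hf.memLinf).mul' (memLp_top_charFun _)
  exact (((spectrumIn_piece hf l).mul hsymb (Lp.memLp F) hF).mono
    (orthantSlice_add_subset l 0)).congr_ae hgF.symm

lemma seqM_le_H2 (hf : ∀ l, IsHinf (f l)) : seqM f ≤ H2 (n+1) := by
  refine Submodule.topologicalClosure_minimal _ (Submodule.span_le.2 <| Set.iUnion_subset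
    fun l g hg => ?_) (isClosed_H2 _)
  refine (mem_H2_iff g).2 ((spectrumIn_of_mem_seqPiece (hf l) hg).mono ?_)
  exact fun γ hγ => hγ.1

lemma mulOp_zCoord_castSucc_mem_seqPiece (j : Fin n) (hg : g ∈ seqPiece f l) :
    mulOp (memLp_top_zCoord j.castSucc) g ∈ seqPiece f l := by
  obtain ⟨F, hF, hgF⟩ := hg
  refine ⟨_, mulOp_mem_H2resLast (memLp_top_zCoord _) (spectrumIn_zCoord_castSucc j) hF, ?_⟩
  filter_upwards [coeFn_mulOp (memLp_top_zCoord _) g, coeFn_mulOp (memLp_top_zCoord _) F, hgF]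
    with x h1 h2 h3
  rw [h1, h2, h3]
  ring

lemma mulOp_zCoord_last_mem_seqPiece {q : Torus n → ℂ} (hq : IsHinf q)
    (hfq : (fun x => f (l+1) x * q x) =ᵐ[volume] f l) (hg : g ∈ seqPiece f l) :
    mulOp (memLp_top_zCoord (Fin.last n)) g ∈ seqPiece f (l+1) := by
  obtain ⟨F, hF, hgF⟩ := hg
  refine ⟨_, mulOp_mem_H2resLast (memLp_liftLast hq.memLinf) hq.spectrumIn_liftLast hF, ?_⟩
  have hz : ∀ x, zCoord (Fin.last n) x * charFun (Pi.single (Fin.last n) (l : ℤ)) x =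
      charFun (Pi.single (Fin.last n) ((l+1 : ℕ) : ℤ)) x := by
    intro x
    rw [zCoord, ← charFun_add, ← Pi.single_add, Nat.cast_succ, add_comm (1 : ℤ)]
  filter_upwards [coeFn_mulOp (memLp_top_zCoord _) g, coeFn_mulOp (memLp_liftLast hq.memLinf) F,
    hgF, measurePreserving_init.quasiMeasurePreserving.ae_eq hfq] with x h1 h2 h3 h4
  simp only [Function.comp_apply] at h4
  rw [h1, h2, h3, ← hz x, liftLast, liftLast, liftLast, ← h4]
  ring

lemma mapsTo_mulOp_zCoord_iUnion_seqPiece (hf : SeqCond f) (i : Fin (n+1)) :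
    Set.MapsTo (mulOp (memLp_top_zCoord i)) (⋃ l, seqPiece f l) (⋃ l, seqPiece f l) := by
  intro g hg
  obtain ⟨l, hl⟩ := Set.mem_iUnion.1 hg
  cases i using Fin.lastCases with
  | last =>
    obtain ⟨q, hq, hfq⟩ := hf.2 l
    exact Set.mem_iUnion.2 ⟨l+1, mulOp_zCoord_last_mem_seqPiece hq.1 hfq hl⟩
  | cast j => exact Set.mem_iUnion.2 ⟨l, mulOp_zCoord_castSucc_mem_seqPiece j hl⟩

lemma mulSet_zCoord_seqM_subset (hf : SeqCond f) (i : Fin (n+1)) :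
    mulSet (zCoord i) (seqM f : Set (Lp2 (n+1))) ⊆ seqM f := by
  rintro h ⟨g, hg, hgh⟩
  have hmul : mulOp (memLp_top_zCoord i) g = h := Lp.ext ((coeFn_mulOp _ g).trans hgh.symm)
  exact hmul ▸ mapsTo_topologicalClosure_span (mapsTo_mulOp_zCoord_iUnion_seqPiece hf i) hg

end PolydiscHardy

theorem stmt_1_general {n : ℕ} (f : ℕ → Torus n → ℂ) (hf : SeqCond f) :
    (seqM f : Set (Lp2 (n+1))) ⊆ H2set (n+1) ∧
      IsInvariantSubspace (seqM f : Set (Lp2 (n+1))) :=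
  ⟨PolydiscHardy.seqM_le_H2 fun l => (hf.1 l).1,
    { zero_mem := (seqM f).zero_mem
      add_mem := fun _ _ => (seqM f).add_mem
      smul_mem := fun c _ => (seqM f).smul_mem c
      closed := Submodule.isClosed_topologicalClosure _
      shift_mem := PolydiscHardy.mulSet_zCoord_seqM_subset hf }⟩

/-- a sequence-based subspace `⊕_{l≥0} f_l H²(𝔻^{n-1}) z_n^l` (with every `f_l`
and every quotient `f_l/f_{l+1}` generalized inner) is a closed subspace of `H²(𝔻ⁿ)` invariant
under multiplication by every coordinate. -/
theorem stmt_1 {n : ℕ} (hn : 0 < n) (f : ℕ → Torus n → ℂ) (hf : SeqCond f) :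
    (seqM f : Set (Lp2 (n+1))) ⊆ H2set (n+1) ∧
      IsInvariantSubspace (seqM f : Set (Lp2 (n+1))) :=
  stmt_1_general f hf

end
end

section
/- Let Θ(z₁) = f₁(z₁)P₀ + P₁ be operator inner with f₁ a nonconstant inner function, P₁ an orthogonal projection on H²(D^{n-1}) and P₀ = I − P₁, and suppose M = Θ·H²(D^n) is invariant under multiplication by z_i for all i = 2,…,n. Then P₀ z_i P₁ = 0 on H²(D^{n-1}) for each i = 2,…,n; equivalently, the range of P₁ is an invariant subspace of H²(D^{n-1}). -/
/-!
Common setup: we model the Hardy space `H²(𝔻ⁿ)` via boundary values on the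
`n`-torus `Tⁿ = (ℝ/ℤ)ⁿ`: `H²` is the subspace of `L²(Tⁿ)` of functions whose
Fourier coefficients with some negative index vanish.  `H^∞` functions are
(a.e. classes of) essentially bounded measurable functions with analytic
(nonnegative) Fourier spectrum, identified with their boundary functions `f*`.
Multiplication operators are expressed via a.e. pointwise products.
-/

open MeasureTheory Complex
open scoped ComplexConjugate

noncomputable section

/-!
Since `V` commutes with the shift, the `0`-th coefficient of `V F` depends only on `F 0`, and on
constants `V` acts as `Θ(0) = f̂₁(0) P₀ + P₁`. The constant `P₁ x` is fixed by `V`, so by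
invariance the constant `y = z_i P₁ x` lies in `ran V`, say `y = V F`; comparing `0`-th coefficients gives
`y = f̂₁(0) P₀ x₀ + P₁ x₀` with `x₀ = F 0`, while `‖x₀‖ ≤ ‖F‖ = ‖y‖`. As `f₁` is a nonconstant
inner function, `|f̂₁(0)| = |∫ f₁| < 1` by strict convexity of `ℂ`, and Pythagoras forces `P₀ x₀ = 0`, i.e. `y = P₁ x₀ ∈ ran P₁`.
-/

instance : IsProbabilityMeasure (volume : Measure UnitAddCircle) :=
  ⟨UnitAddCircle.measure_univ⟩

theorem norm_integral_lt_one_of_not_ae_eq_const {α E : Type*} [MeasurableSpace α]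
    {μ : Measure α} [IsProbabilityMeasure μ] [NormedAddCommGroup E] [NormedSpace ℝ E]
    [CompleteSpace E] [StrictConvexSpace ℝ E] {f : α → E} (hf : ∀ᵐ x ∂μ, ‖f x‖ ≤ 1)
    (hnc : ¬ ∃ c : E, ∀ᵐ x ∂μ, f x = c) :
    ‖∫ x, f x ∂μ‖ < 1 := by
  rcases ae_eq_const_or_norm_integral_lt_of_norm_le_const hf with hconst | hlt
  · exact absurd ⟨_, hconst⟩ hnc
  · simpa using hlt

theorem hinfCoeff_zero (φ : Torus 1 → ℂ) : hinfCoeff φ 0 = ∫ x, φ x := by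
  simp [hinfCoeff, _root_.charFun]

theorem norm_hinfCoeff_zero_lt_one {f : Torus 1 → ℂ} (hf : IsInner f)
    (hnc : ¬ ∃ c : ℂ, ∀ᵐ x ∂(volume : Measure (Torus 1)), f x = c) :
    ‖hinfCoeff f 0‖ < 1 :=
  hinfCoeff_zero f ▸ norm_integral_lt_one_of_not_ae_eq_const (hf.2.mono fun _ hx => hx.le) hnc

theorem eq_zero_of_norm_add_le_norm_smul_add {𝕜 E : Type*} [RCLike 𝕜] [NormedAddCommGroup E]
    [InnerProductSpace 𝕜 E] {a b : E} {c : 𝕜} (hc : ‖c‖ < 1) (hab : inner 𝕜 a b = 0)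
    (h : ‖a + b‖ ≤ ‖c • a + b‖) : a = 0 := by
  have hcab : inner 𝕜 (c • a) b = 0 := by rw [inner_smul_left, hab, mul_zero]
  have hsq := mul_self_le_mul_self (norm_nonneg _) h
  rw [norm_add_sq_eq_norm_sq_add_norm_sq_of_inner_eq_zero a b hab,
    norm_add_sq_eq_norm_sq_add_norm_sq_of_inner_eq_zero _ b hcab, norm_smul] at hsq
  have hc2 : ‖c‖ * ‖c‖ < 1 := by nlinarith [norm_nonneg c]
  by_contra ha
  have ha' : 0 < ‖a‖ := norm_pos_iff.2 ha
  nlinarith [mul_lt_mul_of_pos_right hc2 (mul_pos ha' ha')]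

theorem apply_eq_self_of_norm_le_norm_smul_sub_add {𝕜 E : Type*} [RCLike 𝕜]
    [NormedAddCommGroup E] [InnerProductSpace 𝕜 E] {P : E →L[𝕜] E}
    (hidem : ∀ x, P (P x) = P x) (hsa : ∀ x y, inner 𝕜 (P x) y = inner 𝕜 x (P y))
    {c : 𝕜} (hc : ‖c‖ < 1) {x : E} (hle : ‖x‖ ≤ ‖c • (x - P x) + P x‖) : P x = x := by
  have horth : inner 𝕜 (x - P x) (P x) = 0 := by
    rw [inner_sub_left, hsa, hidem, sub_self]
  have h := eq_zero_of_norm_add_le_norm_smul_add hc horth (by rwa [sub_add_cancel])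
  exact (sub_eq_zero.mp h).symm

section ShiftRel

variable {K : Type*} [NormedAddCommGroup K]

theorem lp.single_zero_apply_succ (u : K) (m : ℕ) :
    (lp.single 2 0 u : lp (fun _ : ℕ => K) 2) (m + 1) = 0 :=
  lp.single_apply_ne 2 0 u m.succ_ne_zero

theorem lp.single_zero_apply_rel {p : K → K → Prop} {a b : K} (h : p a b) (h0 : p 0 0)
    (m : ℕ) : p ((lp.single 2 0 a : lp (fun _ : ℕ => K) 2) m)
      ((lp.single 2 0 b : lp (fun _ : ℕ => K) 2) m) := by
  cases m with
  | zero => rwa [lp.single_apply_self, lp.single_apply_self]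
  | succ m => rwa [lp.single_zero_apply_succ, lp.single_zero_apply_succ]

theorem exists_shiftRel_of_apply_zero_eq_zero (G : lp (fun _ : ℕ => K) 2) (hG : G 0 = 0) :
    ∃ F, ShiftRel F G := by
  have hmem : Memℓp (fun m => G (m + 1)) 2 :=
    memℓp_gen (((lp.memℓp G).summable (by norm_num)).comp_injective (add_left_injective 1))
  exact ⟨⟨_, hmem⟩, hG, fun _ => rfl⟩

theorem apply_zero_eq_apply_single_zero {F : Type*}
    [FunLike F (lp (fun _ : ℕ => K) 2) (lp (fun _ : ℕ => K) 2)]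
    [AddMonoidHomClass F (lp (fun _ : ℕ => K) 2) (lp (fun _ : ℕ => K) 2)] (V : F)
    (hV : ∀ F G, ShiftRel F G → ShiftRel (V F) (V G)) (G : lp (fun _ : ℕ => K) 2) :
    V G 0 = V (lp.single 2 0 (G 0)) 0 := by
  obtain ⟨R, hR⟩ := exists_shiftRel_of_apply_zero_eq_zero (G - lp.single 2 0 (G 0)) (by
    rw [lp.coeFn_sub, Pi.sub_apply, lp.single_apply_self, sub_self])
  have hVR := (hV _ _ hR).1
  rw [map_sub] at hVR
  exact sub_eq_zero.mp hVR

end ShiftRel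

theorem apply_eq_self_of_single_mem_range {𝕜 E : Type*} [RCLike 𝕜] [NormedAddCommGroup E]
    [InnerProductSpace 𝕜 E] {P : E →L[𝕜] E} (hidem : ∀ x, P (P x) = P x)
    (hsa : ∀ x y, inner 𝕜 (P x) y = inner 𝕜 x (P y)) {F : Type*}
    [FunLike F (lp (fun _ : ℕ => E) 2) (lp (fun _ : ℕ => E) 2)]
    [AddMonoidHomClass F (lp (fun _ : ℕ => E) 2) (lp (fun _ : ℕ => E) 2)] {V : F}
    (hViso : ∀ G, ‖V G‖ = ‖G‖) (hVshift : ∀ F G, ShiftRel F G → ShiftRel (V F) (V G))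
    {c : 𝕜} (hc : ‖c‖ < 1) (hVconst : ∀ u, V (lp.single 2 0 u) 0 = c • (u - P u) + P u)
    {y : E} (hy : lp.single 2 0 y ∈ Set.range V) : P y = y := by
  obtain ⟨G, hG⟩ := hy
  obtain ⟨x, hx⟩ : ∃ x, G 0 = x := ⟨_, rfl⟩
  have hy_eq : y = c • (x - P x) + P x := by
    have h := apply_zero_eq_apply_single_zero V hVshift G
    rwa [hx, hVconst, hG, lp.single_apply_self] at h
  have hle : ‖x‖ ≤ ‖y‖ := calc
    ‖x‖ ≤ ‖G‖ := hx ▸ lp.norm_apply_le_norm two_ne_zero G 0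
    _ = ‖y‖ := by rw [← hViso, hG, lp.norm_single two_pos]
  have hPx : P x = x := apply_eq_self_of_norm_le_norm_smul_sub_add hidem hsa hc (hy_eq ▸ hle)
  simp only [hPx, sub_self, smul_zero, zero_add] at hy_eq
  rw [hy_eq, hPx]

theorem Lp.coeFn_zero_ae_eq_mul {α : Type*} [MeasurableSpace α] {μ : Measure α}
    {p : ENNReal} (φ : α → ℂ) : ⇑(0 : Lp ℂ p μ) =ᵐ[μ] fun t => φ t * (0 : Lp ℂ p μ) t :=
  (Lp.coeFn_zero ℂ p μ).mono fun t ht => by simp only [ht, Pi.zero_apply, mul_zero]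

/-- if `Θ(z₁) = f₁P₀ + P₁` is operator inner (encoded by the shift-commuting
isometry `V = Θ̂` with the stated coefficient action) with `f₁` nonconstant inner, and
`M = Θ H²(𝔻ⁿ) = ran V` is invariant under multiplication by `z_i` for `i = 2,…,n`, then
`P₀ z_i P₁ = 0`, i.e. the range of `P₁` is an invariant subspace of `H²(𝔻^{n-1})`. -/
theorem stmt_14 (n : ℕ) (f₁ : Torus 1 → ℂ) (hf₁ : IsInner f₁)
    (hnc : ¬ ∃ c : ℂ, ∀ᵐ x ∂(volume : Measure (Torus 1)), f₁ x = c)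
    (P₁ : H2 n →L[ℂ] H2 n) (hidem : ∀ x : H2 n, P₁ (P₁ x) = P₁ x)
    (hsa : ∀ x y : H2 n, (inner (𝕜 := ℂ) (P₁ x) y : ℂ) = inner ℂ x (P₁ y))
    (V : lpH n →L[ℂ] lpH n) (hViso : ∀ F, ‖V F‖ = ‖F‖)
    (hVshift : ∀ F G, ShiftRel F G → ShiftRel (V F) (V G))
    (hVcoeff : ∀ (x : H2 n) (F : lpH n),
      ((F : ∀ _ : ℕ, H2 n) 0 = x ∧ ∀ m, (F : ∀ _ : ℕ, H2 n) (m+1) = 0) →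
      ∀ l : ℕ, (V F : ∀ _ : ℕ, H2 n) l
        = hinfCoeff f₁ (l : ℤ) • (x - P₁ x) + (if l = 0 then P₁ x else 0))
    (hinv : ∀ i : Fin n, ∀ F ∈ Set.range V, ∀ G : lpH n,
      (∀ m : ℕ, ((((G : ∀ _ : ℕ, H2 n) m : H2 n) : Lp2 n) : Torus n → ℂ)
          =ᵐ[(volume : Measure (Torus n))]
        fun x => zCoord i x * ((((F : ∀ _ : ℕ, H2 n) m : H2 n) : Lp2 n) : Torus n → ℂ) x)
        → G ∈ Set.range V) :
    ∀ i : Fin n, ∀ x y : H2 n,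
      ((y : Lp2 n) : Torus n → ℂ) =ᵐ[(volume : Measure (Torus n))]
        (fun t => zCoord i t * ((P₁ x : Lp2 n) : Torus n → ℂ) t) →
      P₁ y = y := by
  intro i x y hy
  have hVconst (u : H2 n) (l : ℕ) : (V (lp.single 2 0 u : lpH n) : ∀ _ : ℕ, H2 n) l
      = hinfCoeff f₁ l • (u - P₁ u) + if l = 0 then P₁ u else 0 :=
    hVcoeff u _ ⟨lp.single_apply_self (E := fun _ => H2 n) 2 0 u, lp.single_zero_apply_succ u⟩ l
  have hfix : V (lp.single 2 0 (P₁ x)) = lp.single 2 0 (P₁ x) := by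
    ext1; funext l
    rw [hVconst, hidem, sub_self, smul_zero, zero_add]
    cases l with
    | zero => exact (lp.single_apply_self (E := fun _ => H2 n) 2 0 _).symm
    | succ m => exact (lp.single_zero_apply_succ _ m).symm
  have hmem : (lp.single 2 0 y : lpH n) ∈ Set.range V := by
    refine hinv i _ ⟨_, hfix⟩ _ (lp.single_zero_apply_rel (p := fun (v w : H2 n) =>
      ((v : Lp2 n) : Torus n → ℂ) =ᵐ[volume] fun t => zCoord i t * ((w : Lp2 n) : Torus n → ℂ) t)
      hy ?_)
    rw [ZeroMemClass.coe_zero]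
    exact Lp.coeFn_zero_ae_eq_mul _
  refine apply_eq_self_of_single_mem_range hidem hsa hViso hVshift
    (norm_hinfCoeff_zero_lt_one hf₁ hnc) (fun u => ?_) hmem
  rw [hVconst, Nat.cast_zero, if_pos rfl]

end
end
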